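/- Let d = h ≤ m be positive integers and s1, s2 ≥ 0 be reals. Define the spectrally bounded class W_spec = {(V, U) : V ∈ ℝ^{1×h}, U ∈ ℝ^{h×d}, ‖V‖₂ ≤ s1, ‖U‖₂ ≤ s2} and F_{W_spec} = {x ↦ V[Ux]_+ : (V,U) ∈ W_spec}. Then there exists a sample S = {x_1,…,x_m} ⊂ ℝ^d with ‖x_i‖₂ ≤ 1 for all i such that the empirical Rademacher complexity satisfies R_S(F_{W_spec}) ≥ s1 s2 √h / (16 √m). -/
import Mathlib


noncomputable section

open Finset

/-- Euclidean norm of a finite-dimensional real vector. -/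
def euclNorm {n : ℕ} (x : Fin n → ℝ) : ℝ := Real.sqrt (∑ i, (x i) ^ 2)

/-- ReLU activation. -/
def relu (t : ℝ) : ℝ := max t 0

/-- Two layer ReLU network with scalar output, `x ↦ V [U x]₊`. -/
def netS {d h : ℕ} (V : Fin h → ℝ) (U : Matrix (Fin h) (Fin d) ℝ)
    (x : Fin d → ℝ) : ℝ :=
  ∑ j, V j * relu (∑ k, U j k * x k)

/-- Spectral norm (ℓ₂ operator norm) of a real matrix. -/
def specNorm {a b : ℕ} (M : Matrix (Fin a) (Fin b) ℝ) : ℝ :=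
  ⨆ v : {v : Fin b → ℝ // euclNorm v ≤ 1}, euclNorm (M.mulVec v.val)

/-- Sign associated to a boolean: `±1`. -/
def sg (b : Bool) : ℝ := if b then 1 else -1

namespace RLB

lemma relu_nonneg (t : ℝ) : 0 ≤ relu t := le_max_right _ _

lemma relu_eq (t : ℝ) : relu t = (t + |t|) / 2 := by
  rcases le_total t 0 with ht | ht
  · rw [relu, max_eq_right ht, abs_of_nonpos ht]; ring
  · rw [relu, max_eq_left ht, abs_of_nonneg ht]; ring

lemma relu_smul (a t : ℝ) (ha : 0 ≤ a) : relu (a * t) = a * relu t := by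
  rcases le_total t 0 with ht | ht
  · rw [relu, relu, max_eq_right ht, max_eq_right (mul_nonpos_of_nonneg_of_nonpos ha ht), mul_zero]
  · rw [relu, relu, max_eq_left ht, max_eq_left (mul_nonneg ha ht)]

lemma relu_sq_le (t : ℝ) : relu t ^ 2 ≤ t ^ 2 := by
  rcases le_total t 0 with ht | ht
  · rw [relu, max_eq_right ht]; simpa using sq_nonneg t
  · rw [relu, max_eq_left ht]

lemma relu_zero : relu 0 = 0 := by simp [relu]

lemma euclNorm_nonneg {n : ℕ} (x : Fin n → ℝ) : 0 ≤ euclNorm x := Real.sqrt_nonneg _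

lemma sq_sum_le_one {n : ℕ} {x : Fin n → ℝ} (hx : euclNorm x ≤ 1) : ∑ i, (x i) ^ 2 ≤ 1 := by
  have h0 : (0:ℝ) ≤ ∑ i, (x i) ^ 2 := by positivity
  have := Real.sq_sqrt h0
  calc ∑ i, (x i) ^ 2 = (Real.sqrt (∑ i, (x i) ^ 2)) ^ 2 := this.symm
    _ ≤ 1 ^ 2 := by
        apply pow_le_pow_left₀ (Real.sqrt_nonneg _) hx
    _ = 1 := one_pow 2

/-- Cauchy–Schwarz absolute-value form. -/
lemma abs_sum_le {n : ℕ} (f g : Fin n → ℝ) :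
    |∑ i, f i * g i| ≤ Real.sqrt (∑ i, (f i)^2) * Real.sqrt (∑ i, (g i)^2) := by
  have hcs := Finset.sum_mul_sq_le_sq_mul_sq univ f g
  have habs : |∑ i, f i * g i| = Real.sqrt ((∑ i, f i * g i)^2) := (Real.sqrt_sq_eq_abs _).symm
  rw [habs, ← Real.sqrt_mul (by positivity)]
  exact Real.sqrt_le_sqrt hcs

lemma specNorm_bdd {a b : ℕ} (M : Matrix (Fin a) (Fin b) ℝ) :
    BddAbove (Set.range fun v : {v : Fin b → ℝ // euclNorm v ≤ 1} =>
      euclNorm (M.mulVec v.val)) := by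
  refine ⟨Real.sqrt (∑ j, ∑ k, (M j k)^2), ?_⟩
  rintro y ⟨v, rfl⟩
  have hv := sq_sum_le_one v.2
  unfold euclNorm
  apply Real.sqrt_le_sqrt
  apply Finset.sum_le_sum
  intro j _
  have : (M.mulVec v.val j)^2 ≤ (∑ k, (M j k)^2) * ∑ k, (v.val k)^2 := by
    have : M.mulVec v.val j = ∑ k, M j k * v.val k := by
      simp [Matrix.mulVec, dotProduct]
    rw [this]
    exact Finset.sum_mul_sq_le_sq_mul_sq univ _ _
  calc (M.mulVec v.val j)^2 ≤ (∑ k, (M j k)^2) * ∑ k, (v.val k)^2 := this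
    _ ≤ (∑ k, (M j k)^2) * 1 := by
        apply mul_le_mul_of_nonneg_left hv (by positivity)
    _ = ∑ k, (M j k)^2 := mul_one _

lemma euclNorm_zero {n : ℕ} : euclNorm (0 : Fin n → ℝ) = 0 := by
  simp [euclNorm]

lemma specNorm_nonneg {a b : ℕ} (M : Matrix (Fin a) (Fin b) ℝ) : 0 ≤ specNorm M := by
  have h0 : euclNorm (0 : Fin b → ℝ) ≤ 1 := by rw [euclNorm_zero]; norm_num
  have := le_ciSup (specNorm_bdd M) ⟨0, h0⟩
  calc (0:ℝ) ≤ euclNorm (M.mulVec 0) := euclNorm_nonneg _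
    _ ≤ specNorm M := this

lemma euclNorm_smul {n : ℕ} (a : ℝ) (x : Fin n → ℝ) :
    euclNorm (a • x) = |a| * euclNorm x := by
  unfold euclNorm
  have : ∑ i, ((a • x) i)^2 = a^2 * ∑ i, (x i)^2 := by
    rw [Finset.mul_sum]; apply Finset.sum_congr rfl; intro i _; simp [Pi.smul_apply]; ring
  rw [this, Real.sqrt_mul (sq_nonneg a), Real.sqrt_sq_eq_abs]

lemma euclNorm_eq_zero {n : ℕ} {x : Fin n → ℝ} (hx : euclNorm x = 0) : x = 0 := by
  have h0 : (0:ℝ) ≤ ∑ i, (x i)^2 := by positivity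
  have : ∑ i, (x i)^2 = 0 := by
    have := Real.sqrt_eq_zero h0 |>.mp hx
    exact this
  funext i
  have h2 := (Finset.sum_eq_zero_iff_of_nonneg (fun i _ => sq_nonneg (x i))).mp this i (mem_univ i)
  exact pow_eq_zero_iff two_ne_zero |>.mp h2

lemma euclNorm_mulVec_le {a b : ℕ} (M : Matrix (Fin a) (Fin b) ℝ) (x : Fin b → ℝ) :
    euclNorm (M.mulVec x) ≤ specNorm M * euclNorm x := by
  by_cases hx : euclNorm x = 0
  · have hx0 : x = 0 := euclNorm_eq_zero hx
    rw [hx0, Matrix.mulVec_zero, euclNorm_zero]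
    exact mul_nonneg (specNorm_nonneg M) (by rw [euclNorm_zero])
  · have hxpos : 0 < euclNorm x := lt_of_le_of_ne (euclNorm_nonneg x) (Ne.symm hx)
    set v := (euclNorm x)⁻¹ • x with hv
    have hvnorm : euclNorm v = 1 := by
      rw [hv, euclNorm_smul, abs_of_nonneg (by positivity), inv_mul_cancel₀ hx]
    have hle := le_ciSup (specNorm_bdd M) ⟨v, le_of_eq hvnorm⟩
    have hmv : M.mulVec v = (euclNorm x)⁻¹ • M.mulVec x := by
      rw [hv, Matrix.mulVec_smul]
    rw [hmv, euclNorm_smul, abs_of_nonneg (by positivity)] at hle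
    have hle2 : (euclNorm x)⁻¹ * euclNorm (M.mulVec x) ≤ specNorm M := hle
    nlinarith [specNorm_nonneg M, euclNorm_nonneg (M.mulVec x),
      mul_le_mul_of_nonneg_right hle2 (le_of_lt hxpos), inv_mul_cancel₀ hx]

lemma abs_netS_le {d h : ℕ} (V : Fin h → ℝ) (U : Matrix (Fin h) (Fin d) ℝ) (x : Fin d → ℝ) :
    |netS V U x| ≤ euclNorm V * (specNorm U * euclNorm x) := by
  have h1 : |netS V U x| ≤ euclNorm V * euclNorm (U.mulVec x) := by
    unfold netS
    have heq : ∀ j, (∑ k, U j k * x k) = U.mulVec x j := by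
      intro j; simp [Matrix.mulVec, dotProduct]
    calc |∑ j, V j * relu (∑ k, U j k * x k)|
        ≤ Real.sqrt (∑ j, (V j)^2) * Real.sqrt (∑ j, (relu (∑ k, U j k * x k))^2) :=
          abs_sum_le _ _
      _ ≤ euclNorm V * euclNorm (U.mulVec x) := by
          unfold euclNorm
          apply mul_le_mul_of_nonneg_left _ (Real.sqrt_nonneg _)
          apply Real.sqrt_le_sqrt
          apply Finset.sum_le_sum
          intro j _
          rw [← heq j]
          exact relu_sq_le _
  calc |netS V U x| ≤ euclNorm V * euclNorm (U.mulVec x) := h1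
    _ ≤ euclNorm V * (specNorm U * euclNorm x) :=
        mul_le_mul_of_nonneg_left (euclNorm_mulVec_le U x) (euclNorm_nonneg V)

/-! ### Hadamard matrices indexed by bit vectors -/

/-- Sylvester-type Hadamard entry indexed by bit-vectors. -/
def had {t : ℕ} (a c : Fin t → Bool) : ℝ := ∏ s, (if a s && c s then (-1 : ℝ) else 1)

lemma sum_prod_bool : ∀ {t : ℕ} (g : Fin t → Bool → ℝ),
    ∑ a : Fin t → Bool, ∏ s, g s (a s) = ∏ s, (g s false + g s true) := by
  intro t
  induction t with
  | zero =>
      intro g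
      rw [Fintype.sum_unique]
      simp
  | succ t ih =>
      intro g
      have he := Equiv.sum_comp (Fin.consEquiv (fun _ : Fin (t+1) => Bool))
        (fun a : Fin (t+1) → Bool => ∏ s, g s (a s))
      rw [← he, Fintype.sum_prod_type]
      have hsplit : ∀ (x : Bool) (d : Fin t → Bool),
          (∏ s, g s ((Fin.consEquiv (fun _ : Fin (t+1) => Bool)) (x, d) s))
            = g 0 x * ∏ s : Fin t, g s.succ (d s) := by
        intro x d
        simp only [Fin.consEquiv_apply]
        rw [Fin.prod_univ_succ]
        simp
      rw [Fintype.sum_bool]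
      simp only [hsplit]
      rw [← Finset.mul_sum, ← Finset.mul_sum, ih (fun s x => g s.succ x),
        Fin.prod_univ_succ]
      ring

lemma had_orth {t : ℕ} (c c' : Fin t → Bool) :
    ∑ a : Fin t → Bool, had a c * had a c' = if c = c' then (2^t : ℝ) else 0 := by
  have hprod : ∀ a : Fin t → Bool, had a c * had a c' =
      ∏ s, ((if a s && c s then (-1:ℝ) else 1) * (if a s && c' s then (-1:ℝ) else 1)) := by
    intro a; rw [had, had, ← Finset.prod_mul_distrib]
  simp only [hprod]
  rw [sum_prod_bool (fun s x => (if x && c s then (-1:ℝ) else 1) * (if x && c' s then (-1:ℝ) else 1))]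
  by_cases hcc : c = c'
  · subst hcc
    rw [if_pos rfl]
    have : ∀ s : Fin t, ((if false && c s then (-1:ℝ) else 1) * (if false && c s then (-1:ℝ) else 1)
        + (if true && c s then (-1:ℝ) else 1) * (if true && c s then (-1:ℝ) else 1)) = 2 := by
      intro s; cases hcs : c s <;> norm_num [hcs]
    rw [Finset.prod_congr rfl (fun s _ => this s), Finset.prod_const]
    simp
  · rw [if_neg hcc]
    obtain ⟨s₀, hs₀⟩ := Function.ne_iff.mp hcc
    apply Finset.prod_eq_zero (Finset.mem_univ s₀)
    cases h1 : c s₀ <;> cases h2 : c' s₀ <;> simp_all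

lemma had_pm {t : ℕ} (a c : Fin t → Bool) : had a c = 1 ∨ had a c = -1 := by
  apply Finset.prod_induction _ (fun (x : ℝ) => x = 1 ∨ x = -1)
  · rintro x y (rfl | rfl) (rfl | rfl) <;> norm_num
  · left; rfl
  · intro s _; by_cases hs : a s && c s <;> simp [hs]

lemma relu_had {t : ℕ} (a c : Fin t → Bool) : relu (had a c) = (had a c + 1) / 2 := by
  rcases had_pm a c with h | h <;> rw [h] <;> norm_num [relu]

lemma card_bool_fn {α : Type*} [Fintype α] [DecidableEq α] :
    Fintype.card (α → Bool) = 2 ^ Fintype.card α := by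
  rw [Fintype.card_fun]; rfl

lemma sum_relu_had {t : ℕ} (c : Fin t → Bool) :
    (2^t : ℝ) / 2 ≤ ∑ a : Fin t → Bool, relu (had a c) := by
  have h1 : ∀ a : Fin t → Bool, had a (fun _ => false) = 1 := by
    intro a; unfold had; simp
  have hcol : ∑ a : Fin t → Bool, had a c = (if c = (fun _ => false) then (2^t:ℝ) else 0) := by
    have := had_orth c (fun _ => false)
    simp only [h1, mul_one] at this
    rw [this]
  have hcol0 : 0 ≤ ∑ a : Fin t → Bool, had a c := by
    rw [hcol]; split <;> positivity
  have hcard : (Fintype.card (Fin t → Bool) : ℝ) = 2^t := by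
    rw [card_bool_fn]; simp
  calc (2^t:ℝ)/2 ≤ (∑ a : Fin t → Bool, had a c + 2^t) / 2 := by linarith
    _ = ∑ a : Fin t → Bool, relu (had a c) := by
        rw [Finset.sum_congr rfl (fun a _ => relu_had a c), ← Finset.sum_div]
        rw [Finset.sum_add_distrib, Finset.sum_const, nsmul_eq_mul, mul_one]
        rw [← hcard]
        norm_num

lemma parseval {t : ℕ} (w : (Fin t → Bool) → ℝ) :
    ∑ a : Fin t → Bool, (∑ c, had a c * w c)^2 = 2^t * ∑ c, (w c)^2 := by
  have step1 : ∀ a : Fin t → Bool, (∑ c, had a c * w c)^2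
      = ∑ c, ∑ c', (had a c * w c) * (had a c' * w c') := by
    intro a; rw [sq, Finset.sum_mul_sum]
  rw [Finset.sum_congr rfl (fun a _ => step1 a), Finset.sum_comm]
  have step2 : ∀ c, ∑ a : Fin t → Bool, ∑ c', (had a c * w c) * (had a c' * w c')
      = ∑ c', (w c * w c') * ∑ a, had a c * had a c' := by
    intro c
    rw [Finset.sum_comm]
    apply Finset.sum_congr rfl
    intro c' _
    rw [Finset.mul_sum]
    apply Finset.sum_congr rfl
    intro a _; ring
  rw [Finset.sum_congr rfl (fun c _ => step2 c)]
  have step3 : ∀ c, ∑ c', (w c * w c') * (∑ a : Fin t → Bool, had a c * had a c') = 2^t * (w c)^2 := by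
    intro c
    have : ∀ c', (w c * w c') * (∑ a : Fin t → Bool, had a c * had a c')
        = if c = c' then 2^t * (w c)^2 else 0 := by
      intro c'
      rw [had_orth c c']
      by_cases h : c = c'
      · subst h; simp [sq]; ring
      · simp [h]
    rw [Finset.sum_congr rfl (fun c' _ => this c'), Finset.sum_ite_eq]
    simp
  rw [Finset.sum_congr rfl (fun c _ => step3 c), ← Finset.mul_sum]

/-! ### Moments of Rademacher sums -/

def Sb {n : ℕ} (d : Fin n → Bool) : ℝ := ∑ j, sg (d j)

lemma sum_decomp (n : ℕ) (f : ℝ → ℝ) :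
    ∑ d : Fin (n+1) → Bool, f (Sb d) = ∑ d : Fin n → Bool, (f (Sb d + 1) + f (Sb d - 1)) := by
  have he := Equiv.sum_comp (Fin.consEquiv (fun _ : Fin (n+1) => Bool))
    (fun d : Fin (n+1) → Bool => f (Sb d))
  rw [← he, Fintype.sum_prod_type]
  have hsplit : ∀ (x : Bool) (d : Fin n → Bool),
      Sb ((Fin.consEquiv (fun _ : Fin (n+1) => Bool)) (x, d)) = sg x + Sb d := by
    intro x d
    have hc : ((Fin.consEquiv (fun _ : Fin (n+1) => Bool)) (x, d)) = Fin.cons x d := rfl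
    rw [hc]
    unfold Sb
    rw [Fin.sum_univ_succ]
    simp
  rw [Fintype.sum_bool, ← Finset.sum_add_distrib]
  apply Finset.sum_congr rfl
  intro d _
  rw [hsplit, hsplit]
  have h1 : sg true = 1 := rfl
  have h2 : sg false = -1 := rfl
  rw [h1, h2, show (1:ℝ) + Sb d = Sb d + 1 from add_comm _ _,
    show (-1:ℝ) + Sb d = Sb d - 1 by ring]

lemma moments (n : ℕ) :
    (∑ d : Fin n → Bool, Sb d = 0) ∧
    (∑ d : Fin n → Bool, (Sb d)^2 = n * 2^n) ∧
    (∑ d : Fin n → Bool, (Sb d)^3 = 0) ∧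
    (∑ d : Fin n → Bool, (Sb d)^4 ≤ 3 * n^2 * 2^n) := by
  induction n with
  | zero =>
      have h0 : ∀ d : Fin 0 → Bool, Sb d = 0 := by intro d; simp [Sb]
      simp [h0]
  | succ n ih =>
      obtain ⟨ih1, ih2, ih3, ih4⟩ := ih
      have hcard : ((Fintype.card (Fin n → Bool) : ℝ)) = 2^n := by
        rw [card_bool_fn]; simp
      have hconst : ∑ _d : Fin n → Bool, (1:ℝ) = 2^n := by
        rw [Finset.sum_const, nsmul_eq_mul, mul_one, ← hcard]; simp
      constructor
      · rw [sum_decomp n (fun z => z)]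
        have : ∀ d : Fin n → Bool, (Sb d + 1) + (Sb d - 1) = 2 * Sb d := by intro d; ring
        rw [Finset.sum_congr rfl (fun d _ => this d), ← Finset.mul_sum, ih1, mul_zero]
      constructor
      · rw [sum_decomp n (fun z => z^2)]
        have : ∀ d : Fin n → Bool, ((Sb d + 1)^2 + (Sb d - 1)^2) = 2 * (Sb d)^2 + 2 * 1 := by
          intro d; ring
        rw [Finset.sum_congr rfl (fun d _ => this d), Finset.sum_add_distrib,
          ← Finset.mul_sum, ← Finset.mul_sum, ih2, hconst]
        push_cast
        ring
      constructor
      · rw [sum_decomp n (fun z => z^3)]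
        have : ∀ d : Fin n → Bool, ((Sb d + 1)^3 + (Sb d - 1)^3) = 2 * (Sb d)^3 + 6 * Sb d := by
          intro d; ring
        rw [Finset.sum_congr rfl (fun d _ => this d), Finset.sum_add_distrib,
          ← Finset.mul_sum, ← Finset.mul_sum, ih3, ih1]
        ring
      · rw [sum_decomp n (fun z => z^4)]
        have : ∀ d : Fin n → Bool, ((Sb d + 1)^4 + (Sb d - 1)^4)
            = 2 * (Sb d)^4 + 12 * (Sb d)^2 + 2 * 1 := by
          intro d; ring
        rw [Finset.sum_congr rfl (fun d _ => this d)]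
        rw [Finset.sum_add_distrib, Finset.sum_add_distrib,
          ← Finset.mul_sum, ← Finset.mul_sum, ← Finset.mul_sum, ih2, hconst]
        have h4 := ih4
        have hn0 : (0:ℝ) ≤ (n:ℝ) := Nat.cast_nonneg n
        have hp : (0:ℝ) < 2^n := by positivity
        push_cast
        rw [show ((2:ℝ))^(n+1) = 2*2^n by rw [pow_succ]; ring]
        nlinarith [h4, hp, hn0, mul_nonneg hn0 hp.le,
          mul_nonneg (mul_nonneg hn0 hn0) hp.le]

lemma sum_relu_Sb (n : ℕ) (hn : 1 ≤ n) :
    (2:ℝ)^n * Real.sqrt n / (2 * Real.sqrt 3) ≤ ∑ d : Fin n → Bool, relu (Sb d) := by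
  obtain ⟨M1, M2, M3, M4⟩ := moments n
  set L := ∑ d : Fin n → Bool, |Sb d| with hL
  have hLnn : 0 ≤ L := Finset.sum_nonneg (fun d _ => abs_nonneg _)
  set Q := ∑ d : Fin n → Bool, |Sb d|^3 with hQ
  have hQnn : 0 ≤ Q := Finset.sum_nonneg (fun d _ => by positivity)
  have hK : ∑ d : Fin n → Bool, relu (Sb d) = L / 2 := by
    rw [Finset.sum_congr rfl (fun d _ => relu_eq (Sb d)), ← Finset.sum_div,
      Finset.sum_add_distrib, M1, zero_add]
  have hCS1 : (∑ d : Fin n → Bool, (Sb d)^2)^2 ≤ L * Q := by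
    have h := Finset.sum_mul_sq_le_sq_mul_sq univ
      (fun d : Fin n → Bool => Real.sqrt |Sb d|)
      (fun d : Fin n → Bool => |Sb d| * Real.sqrt |Sb d|)
    have e1 : ∀ d : Fin n → Bool, Real.sqrt |Sb d| * (|Sb d| * Real.sqrt |Sb d|) = (Sb d)^2 := by
      intro d
      rw [show Real.sqrt |Sb d| * (|Sb d| * Real.sqrt |Sb d|)
        = (Real.sqrt |Sb d| * Real.sqrt |Sb d|) * |Sb d| by ring,
        Real.mul_self_sqrt (abs_nonneg _), ← sq_abs]
      ring
    have e2 : ∀ d : Fin n → Bool, (Real.sqrt |Sb d|)^2 = |Sb d| :=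
      fun d => Real.sq_sqrt (abs_nonneg _)
    have e3 : ∀ d : Fin n → Bool, (|Sb d| * Real.sqrt |Sb d|)^2 = |Sb d|^3 := by
      intro d
      rw [mul_pow, Real.sq_sqrt (abs_nonneg _)]
      ring
    rw [Finset.sum_congr rfl (fun d _ => e1 d), Finset.sum_congr rfl (fun d _ => e2 d),
      Finset.sum_congr rfl (fun d _ => e3 d)] at h
    exact h
  have hCS2 : Q^2 ≤ (∑ d : Fin n → Bool, (Sb d)^2) * (∑ d : Fin n → Bool, (Sb d)^4) := by
    have h := Finset.sum_mul_sq_le_sq_mul_sq univ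
      (fun d : Fin n → Bool => |Sb d|)
      (fun d : Fin n → Bool => (Sb d)^2)
    have e1 : ∀ d : Fin n → Bool, |Sb d| * (Sb d)^2 = |Sb d|^3 := by
      intro d; rw [← sq_abs]; ring
    have e2 : ∀ d : Fin n → Bool, (|Sb d|)^2 = (Sb d)^2 := fun d => sq_abs _
    have e3 : ∀ d : Fin n → Bool, ((Sb d)^2)^2 = (Sb d)^4 := by intro d; ring
    rw [Finset.sum_congr rfl (fun d _ => e1 d), Finset.sum_congr rfl (fun d _ => e2 d),
      Finset.sum_congr rfl (fun d _ => e3 d)] at h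
    exact h
  have hp2 : (0:ℝ) < 2^n := by positivity
  have hn1 : (1:ℝ) ≤ (n:ℝ) := by exact_mod_cast hn
  have hM4' : ∑ d : Fin n → Bool, (Sb d)^4 ≤ 3 * (n:ℝ)^2 * 2^n := M4
  have key : (n:ℝ) * (2^n * 2^n) ≤ 3 * L^2 := by
    rw [M2] at hCS1 hCS2
    have h1 : ((n:ℝ) * 2^n)^4 ≤ (L*Q)^2 := by
      calc ((n:ℝ)*2^n)^4 = (((n:ℝ)*2^n)^2)^2 := by ring
        _ ≤ (L*Q)^2 := by
            apply pow_le_pow_left₀ (by positivity) hCS1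
    have h2 : (L*Q)^2 ≤ L^2 * ((n:ℝ)*2^n * (3*(n:ℝ)^2*2^n)) := by
      have : Q^2 ≤ (n:ℝ)*2^n * (3*(n:ℝ)^2*2^n) := le_trans hCS2 (by
        apply mul_le_mul_of_nonneg_left hM4' (by positivity))
      calc (L*Q)^2 = L^2 * Q^2 := by ring
        _ ≤ L^2 * ((n:ℝ)*2^n * (3*(n:ℝ)^2*2^n)) :=
            mul_le_mul_of_nonneg_left this (by positivity)
    have h3 : ((n:ℝ)*2^n)^4 ≤ L^2 * ((n:ℝ)*2^n * (3*(n:ℝ)^2*2^n)) := le_trans h1 h2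
    have hPB : (0:ℝ) < (n:ℝ)^3 * (2^n)^2 := by
      have : (0:ℝ) < (n:ℝ) := lt_of_lt_of_le one_pos hn1
      positivity
    have h5 : (n:ℝ)^3*(2^n)^2 * ((n:ℝ) * (2^n*2^n)) ≤ (n:ℝ)^3*(2^n)^2 * (3*L^2) := by
      calc (n:ℝ)^3*(2^n)^2 * ((n:ℝ) * (2^n*2^n)) = ((n:ℝ)*2^n)^4 := by ring
        _ ≤ L^2 * ((n:ℝ)*2^n * (3*(n:ℝ)^2*2^n)) := h3
        _ = (n:ℝ)^3*(2^n)^2 * (3*L^2) := by ring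
    exact le_of_mul_le_mul_left h5 hPB
  have hsqrt3 : (0:ℝ) < Real.sqrt 3 := Real.sqrt_pos.mpr (by norm_num)
  have hA : ((2:ℝ)^n * Real.sqrt n / Real.sqrt 3)^2 = (n:ℝ) * (2^n * 2^n) / 3 := by
    rw [div_pow, mul_pow, Real.sq_sqrt (by positivity : (0:ℝ) ≤ (n:ℝ)),
      Real.sq_sqrt (by norm_num : (0:ℝ) ≤ 3)]
    ring
  have hAL : (2:ℝ)^n * Real.sqrt n / Real.sqrt 3 ≤ L := by
    have hAnn : (0:ℝ) ≤ (2:ℝ)^n * Real.sqrt n / Real.sqrt 3 := by positivity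
    have hsq : ((2:ℝ)^n * Real.sqrt n / Real.sqrt 3)^2 ≤ L^2 := by
      rw [hA]; linarith
    calc (2:ℝ)^n * Real.sqrt n / Real.sqrt 3
        = Real.sqrt (((2:ℝ)^n * Real.sqrt n / Real.sqrt 3)^2) := (Real.sqrt_sq hAnn).symm
      _ ≤ Real.sqrt (L^2) := Real.sqrt_le_sqrt hsq
      _ = L := Real.sqrt_sq hLnn
  rw [hK]
  calc (2:ℝ)^n * Real.sqrt n / (2 * Real.sqrt 3)
      = ((2:ℝ)^n * Real.sqrt n / Real.sqrt 3) / 2 := by ring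
    _ ≤ L / 2 := by linarith

/-- Marginalization: summing a function of the restriction to a subset. -/
lemma marg {m : ℕ} (A : Finset (Fin m)) (F : ℝ → ℝ) :
    ∑ b : Fin m → Bool, F (∑ i ∈ A, sg (b i))
      = 2^(m - A.card) * ∑ u : {x : Fin m // x ∈ A} → Bool, F (∑ x, sg (u x)) := by
  classical
  set e := Equiv.piEquivPiSubtypeProd (fun i : Fin m => i ∈ A) (fun _ => Bool) with he
  have h1 : ∑ b : Fin m → Bool, F (∑ i ∈ A, sg (b i))
      = ∑ q : ({x : Fin m // x ∈ A} → Bool) × ({x : Fin m // ¬ x ∈ A} → Bool),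
          F (∑ x : {x : Fin m // x ∈ A}, sg (q.1 x)) := by
    rw [← Equiv.sum_comp e.symm (fun b : Fin m → Bool => F (∑ i ∈ A, sg (b i)))]
    apply Finset.sum_congr rfl
    intro q _
    congr 1
    rw [← Finset.sum_coe_sort A (fun i => sg (e.symm q i))]
    apply Finset.sum_congr rfl
    intro x _
    congr 1
    have : e.symm q x.val = q.1 x := by
      rw [he]
      simp [Equiv.piEquivPiSubtypeProd, x.2]
    rw [this]
  rw [h1, Fintype.sum_prod_type]
  have h2 : ∀ u : {x : Fin m // x ∈ A} → Bool,
      ∑ _v : {x : Fin m // ¬ x ∈ A} → Bool, F (∑ x : {x : Fin m // x ∈ A}, sg (u x))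
        = 2^(m - A.card) * F (∑ x : {x : Fin m // x ∈ A}, sg (u x)) := by
    intro u
    rw [Finset.sum_const, nsmul_eq_mul]
    congr 1
    rw [card_univ, card_bool_fn, Fintype.card_subtype_compl, Fintype.card_coe]
    push_cast
    simp
  rw [Finset.sum_congr rfl (fun u _ => h2 u), ← Finset.mul_sum]

/-- transport along an equivalence of index types -/
lemma sum_sg_transport {α β : Type*} [Fintype α] [Fintype β] [DecidableEq α] [DecidableEq β]
    (e : α ≃ β) (F : ℝ → ℝ) :
    ∑ u : α → Bool, F (∑ x, sg (u x)) = ∑ d : β → Bool, F (∑ y, sg (d y)) := by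
  rw [← Equiv.sum_comp (e.arrowCongr (Equiv.refl Bool))
    (fun d : β → Bool => F (∑ y, sg (d y)))]
  apply Finset.sum_congr rfl
  intro u _
  congr 1
  rw [← Equiv.sum_comp e (fun y => sg ((e.arrowCongr (Equiv.refl Bool)) u y))]
  apply Finset.sum_congr rfl
  intro x _
  congr 1
  simp [Equiv.arrowCongr]

/-- Final numeric comparison. -/
lemma final_num (h m h' n : ℕ) (hmpos : 0 < m) (hkey : 3*(h*m) ≤ 16*(h'*(h'*n))) :
    Real.sqrt h / (16*Real.sqrt m) ≤ (h':ℝ)*Real.sqrt n/(4*Real.sqrt 3*m) := by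
  have hm0 : (0:ℝ) < m := by exact_mod_cast hmpos
  have hsm : (0:ℝ) < Real.sqrt m := Real.sqrt_pos.mpr hm0
  have hs3 : (0:ℝ) < Real.sqrt 3 := Real.sqrt_pos.mpr (by norm_num)
  rw [div_le_div_iff₀ (by positivity) (by positivity)]
  have e1 : Real.sqrt ((3*(h*m) : ℕ) : ℝ) ≤ Real.sqrt ((16*(h'*(h'*n)) : ℕ) : ℝ) :=
    Real.sqrt_le_sqrt (by exact_mod_cast hkey)
  have e2 : Real.sqrt ((3*(h*m) : ℕ) : ℝ) = Real.sqrt 3 * Real.sqrt h * Real.sqrt m := by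
    push_cast
    rw [Real.sqrt_mul (by norm_num : (0:ℝ) ≤ 3), Real.sqrt_mul (by positivity)]
    ring
  have e3 : Real.sqrt ((16*(h'*(h'*n)) : ℕ) : ℝ) = 4*((h':ℝ) * Real.sqrt n) := by
    push_cast
    rw [show (16:ℝ)*((h':ℝ)*((h':ℝ)*(n:ℝ))) = (4*(h':ℝ))^2 * (n:ℝ) by ring,
      Real.sqrt_mul (by positivity), Real.sqrt_sq (by positivity)]
    ring
  rw [e2, e3] at e1
  have hmm : Real.sqrt m * Real.sqrt m = (m:ℝ) := Real.mul_self_sqrt hm0.le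
  calc Real.sqrt h * (4*Real.sqrt 3*(m:ℝ))
      = 4*Real.sqrt m * (Real.sqrt 3 * Real.sqrt h * Real.sqrt m) := by
        linear_combination (-(4*Real.sqrt 3 * Real.sqrt (h:ℝ))) * hmm
    _ ≤ 4*Real.sqrt m * (4*((h':ℝ)*Real.sqrt n)) := by
        apply mul_le_mul_of_nonneg_left e1 (by positivity)
    _ = (h':ℝ)*Real.sqrt n * (16*Real.sqrt m) := by ring

end RLB

open RLB

/-- Rademacher complexity lower bound for the spectral-norm bounded
class `F_{W_spec}` with `d = h ≤ m`, on a sample of points of Euclidean norm at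
most one. -/
theorem rademacher_lower_bound_spectral
    (h m : ℕ) (hh : 0 < h) (hm : h ≤ m)
    (s1 s2 : ℝ) (hs1 : 0 ≤ s1) (hs2 : 0 ≤ s2) :
    ∃ x : Fin m → Fin h → ℝ,
      (∀ i, euclNorm (x i) ≤ 1) ∧
      (1 / m : ℝ) *
        ((∑ b : Fin m → Bool,
          ⨆ p : {q : (Fin h → ℝ) × Matrix (Fin h) (Fin h) ℝ //
              euclNorm q.1 ≤ s1 ∧ specNorm q.2 ≤ s2},
            ∑ i, sg (b i) * netS p.val.1 p.val.2 (x i)) / 2 ^ m)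
        ≥ s1 * s2 * Real.sqrt h / (16 * Real.sqrt m) := by
  classical
  -- ### numeric setup
  set t := Nat.log 2 h with htdef
  set h' := 2 ^ t with hh'def
  have hh'pos : 0 < h' := Nat.two_pow_pos t
  have hh'le : h' ≤ h := Nat.pow_log_le_self 2 hh.ne'
  have hhlt : h < 2 * h' := by
    have h1 := Nat.lt_pow_succ_log_self (by norm_num : 1 < 2) h
    rw [pow_succ] at h1
    rw [hh'def, htdef]
    omega
  set n := m / h' with hndef
  have hnpos : 0 < n := Nat.div_pos (le_trans hh'le hm) hh'pos
  have hactive : h' * n ≤ m := by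
    rw [hndef]
    calc h' * (m / h') = (m / h') * h' := mul_comm _ _
      _ ≤ m := Nat.div_mul_le_self m h'
  have hmlt : m < h' * n + h' := by
    have hdm := Nat.div_add_mod m h'
    have hmod := Nat.mod_lt m hh'pos
    calc m = h' * (m / h') + m % h' := hdm.symm
      _ < h' * (m / h') + h' := Nat.add_lt_add_left hmod _
      _ = h' * n + h' := by rw [hndef]
  have hmn2 : m ≤ 2 * (h' * n) := by
    have h1 : h' ≤ h' * n := Nat.le_mul_of_pos_right h' hnpos
    calc m ≤ h' * n + h' := le_of_lt hmlt
      _ ≤ h' * n + h' * n := Nat.add_le_add_left h1 _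
      _ = 2 * (h' * n) := by ring
  have hkey : 3*(h*m) ≤ 16*(h'*(h'*n)) := by
    calc 3*(h*m) ≤ 3*((2*h') * (2*(h'*n))) := by
          apply Nat.mul_le_mul_left
          exact Nat.mul_le_mul (le_of_lt hhlt) hmn2
      _ = 12*(h'*(h'*n)) := by ring
      _ ≤ 16*(h'*(h'*n)) := Nat.mul_le_mul_right _ (by norm_num)
  have hnm : n ≤ m := Nat.div_le_self m h'
  have hmpos : 0 < m := lt_of_lt_of_le hh hm
  -- ### index bookkeeping
  have cardI : Fintype.card (Fin t → Bool) = h' := by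
    rw [card_bool_fn]; simp [hh'def]
  set E : (Fin t → Bool) ≃ Fin h' := Fintype.equivFinOfCardEq cardI with hEdef
  set emb : (Fin t → Bool) → Fin h := fun a => Fin.castLE hh'le (E a) with hembdef
  have emb_lt : ∀ a, ((emb a : Fin h) : ℕ) < h' := fun a => (E a).isLt
  have emb_inj : Function.Injective emb := by
    intro a b hab
    apply E.injective
    apply Fin.ext
    have h2 := congrArg Fin.val hab
    simpa [hembdef] using h2
  set dec : Fin h → (Fin t → Bool) := fun j => E.symm ⟨j.val % h', Nat.mod_lt _ hh'pos⟩
    with hdecdef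
  have dec_emb : ∀ a, dec (emb a) = a := by
    intro a
    simp only [hdecdef]
    rw [Equiv.symm_apply_eq]
    apply Fin.ext
    show ((emb a : Fin h) : ℕ) % h' = ((E a : Fin h') : ℕ)
    rw [Nat.mod_eq_of_lt (emb_lt a)]
    simp [hembdef]
  have mem_image_emb : ∀ j : Fin h, (j : ℕ) < h' → ∃ a, emb a = j := by
    intro j hj
    refine ⟨E.symm ⟨j.val, hj⟩, ?_⟩
    apply Fin.ext
    simp only [hembdef]
    rw [Equiv.apply_symm_apply]
    rfl
  have sum_finh : ∀ f : Fin h → ℝ, (∀ j : Fin h, ¬ ((j:ℕ) < h') → f j = 0) →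
      ∑ j, f j = ∑ a : Fin t → Bool, f (emb a) := by
    intro f hf
    have himg : ∑ j ∈ Finset.image emb univ, f j = ∑ a : Fin t → Bool, f (emb a) :=
      Finset.sum_image (fun a _ b _ hab => emb_inj hab)
    rw [← himg]
    symm
    apply Finset.sum_subset (Finset.subset_univ _)
    intro j _ hj
    apply hf
    intro hjlt
    apply hj
    obtain ⟨a, ha⟩ := mem_image_emb j hjlt
    exact Finset.mem_image.mpr ⟨a, Finset.mem_univ a, ha⟩
  -- group assignment
  set grp : Fin m → (Fin t → Bool) := fun i => E.symm ⟨(i.val / n) % h', Nat.mod_lt _ hh'pos⟩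
    with hgrpdef
  -- ### the sample
  set x : Fin m → Fin h → ℝ :=
    fun i k => if ((i : ℕ) < h' * n ∧ k = emb (grp i)) then 1 else 0 with hxdef
  have hxnorm : ∀ i, euclNorm (x i) ≤ 1 := by
    intro i
    unfold euclNorm
    by_cases hi : (i : ℕ) < h' * n
    · have hsq : ∀ k : Fin h, (x i k)^2 = if k = emb (grp i) then 1 else 0 := by
        intro k
        simp only [hxdef]
        by_cases hk : k = emb (grp i)
        · rw [if_pos ⟨hi, hk⟩, if_pos hk]; norm_num
        · rw [if_neg (fun hc => hk hc.2), if_neg hk]; norm_num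
      rw [Finset.sum_congr rfl (fun k _ => hsq k),
        Finset.sum_ite_eq' univ (emb (grp i)) (fun _ => (1:ℝ))]
      simp
    · have hsq : ∑ k, (x i k)^2 = 0 := by
        apply Finset.sum_eq_zero
        intro k _
        simp only [hxdef]
        rw [if_neg (fun hc => hi hc.1)]
        norm_num
      rw [hsq, Real.sqrt_zero]
      norm_num
  refine ⟨x, hxnorm, ?_⟩
  rw [ge_iff_le]
  -- ### the Rademacher correlation variables
  set T : (Fin m → Bool) → (Fin t → Bool) → ℝ :=
    fun b c => ∑ i : Fin m, if ((i:ℕ) < h' * n ∧ grp i = c) then sg (b i) else 0 with hTdef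
  set rh : ℝ := Real.sqrt h' with hrhdef
  have hrhpos : 0 < rh := Real.sqrt_pos.mpr (by exact_mod_cast hh'pos)
  have hrhsq : rh * rh = (h' : ℝ) := Real.mul_self_sqrt (by positivity)
  have hh'cast : ((h':ℕ):ℝ) = (2:ℝ)^t := by rw [hh'def]; push_cast; ring
  set R : (Fin t → Bool) → ℝ := fun c => ∑ a : Fin t → Bool, relu (had a c) with hRdef
  have hRge : ∀ c, (h' : ℝ)/2 ≤ R c := by
    intro c
    simp only [hRdef]
    have h1 := sum_relu_had c
    calc (h' : ℝ)/2 = (2^t : ℝ)/2 := by rw [hh'cast]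
      _ ≤ _ := h1
  -- the (b-independent) output layer weights
  set V : Fin h → ℝ := fun j => if (j:ℕ) < h' then s1 / rh else 0 with hVdef
  have hV : euclNorm V ≤ s1 := by
    have hVeq : euclNorm V = s1 := by
      unfold euclNorm
      have hzero : ∀ j : Fin h, ¬ ((j:ℕ) < h') → (V j)^2 = 0 := by
        intro j hj; simp only [hVdef]; rw [if_neg hj]; norm_num
      rw [sum_finh (fun j => (V j)^2) hzero]
      have hval2 : ∀ a : Fin t → Bool, (V (emb a))^2 = s1^2/((h':ℕ):ℝ) := by
        intro a
        simp only [hVdef]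
        rw [if_pos (emb_lt a), div_pow]
        congr 1
        rw [sq, hrhsq]
      rw [Finset.sum_congr rfl (fun a _ => hval2 a), Finset.sum_const, nsmul_eq_mul,
        card_univ, cardI]
      have hmul : ((h':ℕ):ℝ) * (s1^2/((h':ℕ):ℝ)) = s1^2 := by
        field_simp
      rw [hmul, Real.sqrt_sq hs1]
    exact le_of_eq hVeq
  -- ### per-sign-vector lower bound on the supremum
  have main : ∀ b : Fin m → Bool,
      s1*s2/2 * (∑ c : Fin t → Bool, relu (T b c))
        ≤ ⨆ p : {q : (Fin h → ℝ) × Matrix (Fin h) (Fin h) ℝ //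
              euclNorm q.1 ≤ s1 ∧ specNorm q.2 ≤ s2},
            ∑ i, sg (b i) * netS p.val.1 p.val.2 (x i) := by
    intro b
    -- the adapted weight matrix
    set U : Matrix (Fin h) (Fin h) ℝ := fun j k =>
      if ((j:ℕ) < h' ∧ (k:ℕ) < h') then
        (if 0 < T b (dec k) then s2 * had (dec j) (dec k) / rh else 0) else 0 with hUdef
    -- spectral norm bound
    have hU : specNorm U ≤ s2 := by
      haveI : Nonempty {v : Fin h → ℝ // euclNorm v ≤ 1} :=
        ⟨⟨0, by rw [euclNorm_zero]; norm_num⟩⟩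
      apply ciSup_le
      intro v
      set w : (Fin t → Bool) → ℝ := fun c => if 0 < T b c then v.val (emb c) else 0 with hwdef
      have hrow0 : ∀ j : Fin h, ¬ ((j:ℕ) < h') → U.mulVec v.val j = 0 := by
        intro j hj
        have hz : ∀ k : Fin h, U j k = 0 := by
          intro k; simp only [hUdef]; rw [if_neg (fun hc => hj hc.1)]
        simp [Matrix.mulVec, dotProduct, hz]
      have hrow : ∀ a : Fin t → Bool,
          U.mulVec v.val (emb a) = (s2/rh) * ∑ c, had a c * w c := by
        intro a
        have hmv : U.mulVec v.val (emb a) = ∑ k, U (emb a) k * v.val k := by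
          simp [Matrix.mulVec, dotProduct]
        rw [hmv]
        have hzero : ∀ k : Fin h, ¬ ((k:ℕ) < h') → U (emb a) k * v.val k = 0 := by
          intro k hk
          simp only [hUdef]
          rw [if_neg (fun hc => hk hc.2), zero_mul]
        rw [sum_finh (fun k => U (emb a) k * v.val k) hzero, Finset.mul_sum]
        apply Finset.sum_congr rfl
        intro c _
        simp only [hUdef]
        rw [if_pos ⟨emb_lt a, emb_lt c⟩, dec_emb, dec_emb]
        by_cases hT : 0 < T b c
        · rw [if_pos hT]
          simp only [hwdef]
          rw [if_pos hT]
          ring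
        · rw [if_neg hT, zero_mul]
          simp only [hwdef]
          rw [if_neg hT, mul_zero, mul_zero]
      have hsumsq : ∑ j, (U.mulVec v.val j)^2 = (s2/rh)^2 * ((2:ℝ)^t * ∑ c, (w c)^2) := by
        have hzero : ∀ j : Fin h, ¬ ((j:ℕ) < h') → (U.mulVec v.val j)^2 = 0 := by
          intro j hj; rw [hrow0 j hj]; norm_num
        rw [sum_finh (fun j => (U.mulVec v.val j)^2) hzero]
        rw [Finset.sum_congr rfl (fun a _ => by rw [hrow a, mul_pow])]
        rw [← Finset.mul_sum, parseval w]
      have hwle : ∑ c, (w c)^2 ≤ 1 := by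
        have h1 : ∑ c, (w c)^2 ≤ ∑ c, (v.val (emb c))^2 := by
          apply Finset.sum_le_sum
          intro c _
          simp only [hwdef]
          by_cases hT : 0 < T b c
          · rw [if_pos hT]
          · rw [if_neg hT]
            simpa using sq_nonneg (v.val (emb c))
        have h2 : ∑ c, (v.val (emb c))^2 ≤ ∑ k, (v.val k)^2 := by
          have himg : ∑ k ∈ Finset.image emb univ, (v.val k)^2
              = ∑ c, (v.val (emb c))^2 :=
            Finset.sum_image (fun a _ b _ hab => emb_inj hab)
          rw [← himg]
          apply Finset.sum_le_sum_of_subset_of_nonneg (Finset.subset_univ _)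
          intro k _ _
          positivity
        calc ∑ c, (w c)^2 ≤ ∑ c, (v.val (emb c))^2 := h1
          _ ≤ ∑ k, (v.val k)^2 := h2
          _ ≤ 1 := sq_sum_le_one v.2
      have hfin : ∑ j, (U.mulVec v.val j)^2 ≤ s2^2 := by
        rw [hsumsq]
        have hrht : rh^2 = (2:ℝ)^t := by rw [sq, hrhsq, hh'cast]
        have hcoef : (s2/rh)^2 * (2:ℝ)^t = s2^2 := by
          rw [div_pow, hrht]
          rw [div_mul_cancel₀ _ (by positivity : ((2:ℝ)^t) ≠ 0)]
        calc (s2/rh)^2 * ((2:ℝ)^t * ∑ c, (w c)^2)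
            = ((s2/rh)^2 * (2:ℝ)^t) * ∑ c, (w c)^2 := by ring
          _ = s2^2 * ∑ c, (w c)^2 := by rw [hcoef]
          _ ≤ s2^2 * 1 := mul_le_mul_of_nonneg_left hwle (by positivity)
          _ = s2^2 := mul_one _
      unfold euclNorm
      calc Real.sqrt (∑ j, (U.mulVec v.val j)^2) ≤ Real.sqrt (s2^2) :=
            Real.sqrt_le_sqrt hfin
        _ = s2 := Real.sqrt_sq hs2
    -- network values on the sample
    have netval : ∀ i : Fin m, ((i:ℕ) < h' * n) →
        netS V U (x i) = (s1/rh) * (if 0 < T b (grp i) then (s2/rh) * R (grp i) else 0) := by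
      intro i hi
      have hinner : ∀ j : Fin h, (∑ k, U j k * x i k) = U j (emb (grp i)) := by
        intro j
        have hterm : ∀ k : Fin h, U j k * x i k = if k = emb (grp i) then U j k else 0 := by
          intro k
          simp only [hxdef]
          by_cases hk : k = emb (grp i)
          · rw [if_pos ⟨hi, hk⟩, if_pos hk, mul_one]
          · rw [if_neg (fun hc => hk hc.2), if_neg hk, mul_zero]
        rw [Finset.sum_congr rfl (fun k _ => hterm k),
          Finset.sum_ite_eq' univ (emb (grp i)) (fun k => U j k)]
        simp
      show (∑ j, V j * relu (∑ k, U j k * x i k)) = _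
      rw [Finset.sum_congr rfl (fun j _ => by rw [hinner j])]
      have hzero : ∀ j : Fin h, ¬ ((j:ℕ) < h') → V j * relu (U j (emb (grp i))) = 0 := by
        intro j hj
        simp only [hVdef]
        rw [if_neg hj, zero_mul]
      rw [sum_finh (fun j => V j * relu (U j (emb (grp i)))) hzero]
      have hterm2 : ∀ a : Fin t → Bool, V (emb a) * relu (U (emb a) (emb (grp i)))
          = (s1/rh) * (if 0 < T b (grp i) then (s2/rh) * relu (had a (grp i)) else 0) := by
        intro a
        simp only [hVdef, hUdef]
        rw [if_pos (emb_lt a), if_pos ⟨emb_lt a, emb_lt (grp i)⟩, dec_emb, dec_emb]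
        by_cases hT : 0 < T b (grp i)
        · rw [if_pos hT, if_pos hT]
          rw [show s2 * had a (grp i) / rh = (s2/rh) * had a (grp i) by ring]
          rw [relu_smul _ _ (by positivity)]
        · rw [if_neg hT, if_neg hT, relu_zero]
          try ring
      rw [Finset.sum_congr rfl (fun a _ => hterm2 a), ← Finset.mul_sum]
      congr 1
      by_cases hT : 0 < T b (grp i)
      · simp only [if_pos hT]
        rw [← Finset.mul_sum]
        try simp only [hRdef]
      · simp only [if_neg hT]
        try exact Finset.sum_const_zero
    have netzero : ∀ i : Fin m, ¬ ((i:ℕ) < h' * n) → netS V U (x i) = 0 := by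
      intro i hi
      have hx0 : ∀ k, x i k = 0 := by
        intro k
        simp only [hxdef]
        rw [if_neg (fun hc => hi hc.1)]
      show (∑ j, V j * relu (∑ k, U j k * x i k)) = 0
      apply Finset.sum_eq_zero
      intro j _
      rw [Finset.sum_eq_zero (fun k _ => by rw [hx0 k, mul_zero]), relu_zero, mul_zero]
    -- total correlation value
    set G : (Fin t → Bool) → ℝ :=
      fun c => (s1/rh) * (if 0 < T b c then (s2/rh) * R c else 0) with hGdef
    have hval : ∑ i, sg (b i) * netS V U (x i) = ∑ c : Fin t → Bool, T b c * G c := by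
      have hterm : ∀ i : Fin m, sg (b i) * netS V U (x i)
          = if (i:ℕ) < h' * n then sg (b i) * G (grp i) else 0 := by
        intro i
        by_cases hi : (i:ℕ) < h' * n
        · rw [if_pos hi, netval i hi]
          try simp only [hGdef]
        · rw [if_neg hi, netzero i hi, mul_zero]
      rw [Finset.sum_congr rfl (fun i _ => hterm i)]
      rw [← Finset.sum_fiberwise_of_maps_to (fun i _ => Finset.mem_univ (grp i))
        (fun i => if (i:ℕ) < h' * n then sg (b i) * G (grp i) else 0)]
      apply Finset.sum_congr rfl
      intro c _
      have hstep : ∀ i ∈ univ.filter (fun i : Fin m => grp i = c),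
          (if (i:ℕ) < h' * n then sg (b i) * G (grp i) else 0)
            = (if ((i:ℕ) < h' * n ∧ grp i = c) then sg (b i) else 0) * G c := by
        intro i hi
        have hgc : grp i = c := (Finset.mem_filter.mp hi).2
        by_cases hia : (i:ℕ) < h' * n
        · rw [if_pos hia, if_pos ⟨hia, hgc⟩, hgc]
        · rw [if_neg hia, if_neg (fun hc => hia hc.1), zero_mul]
      rw [Finset.sum_congr rfl hstep, ← Finset.sum_mul]
      congr 1
      simp only [hTdef]
      rw [Finset.sum_filter]
      apply Finset.sum_congr rfl
      intro i _
      by_cases h1 : grp i = c <;> by_cases h2 : (i:ℕ) < h' * n <;> simp [h1, h2]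
    -- pointwise lower bound
    have hlow : ∀ c : Fin t → Bool, s1*s2/2 * relu (T b c) ≤ T b c * G c := by
      intro c
      by_cases hT : 0 < T b c
      · have hrelu : relu (T b c) = T b c := max_eq_left hT.le
        rw [hrelu]
        simp only [hGdef]
        rw [if_pos hT]
        have hG2 : (s1/rh) * ((s2/rh) * R c) = s1*s2*R c/((h':ℕ):ℝ) := by
          rw [← hrhsq]
          field_simp
        rw [hG2]
        have h5 : s1*s2/2 ≤ s1*s2*R c/((h':ℕ):ℝ) := by
          rw [div_le_div_iff₀ (by norm_num) (by exact_mod_cast hh'pos : (0:ℝ) < ((h':ℕ):ℝ))]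
          have h6 := mul_le_mul_of_nonneg_left (hRge c) (mul_nonneg hs1 hs2)
          nlinarith [h6]
        calc s1*s2/2 * T b c ≤ (s1*s2*R c/((h':ℕ):ℝ)) * T b c :=
              mul_le_mul_of_nonneg_right h5 hT.le
          _ = T b c * (s1*s2*R c/((h':ℕ):ℝ)) := mul_comm _ _
      · have hrelu : relu (T b c) = 0 := max_eq_right (not_lt.mp hT)
        rw [hrelu]
        simp only [hGdef]
        rw [if_neg hT, mul_zero, mul_zero, mul_zero]
    -- conclude via the supremum
    have bdd : BddAbove (Set.range
        (fun p : {q : (Fin h → ℝ) × Matrix (Fin h) (Fin h) ℝ //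
            euclNorm q.1 ≤ s1 ∧ specNorm q.2 ≤ s2} =>
          ∑ i, sg (b i) * netS p.val.1 p.val.2 (x i))) := by
      refine ⟨(m:ℝ) * (s1*s2), ?_⟩
      rintro y ⟨p, rfl⟩
      have hper : ∀ i : Fin m, sg (b i) * netS p.val.1 p.val.2 (x i) ≤ s1*s2 := by
        intro i
        have h1 := abs_netS_le p.val.1 p.val.2 (x i)
        have h2 : euclNorm p.val.1 * (specNorm p.val.2 * euclNorm (x i)) ≤ s1 * (s2*1) := by
          apply mul_le_mul p.2.1 _ (mul_nonneg (specNorm_nonneg _) (euclNorm_nonneg _)) hs1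
          apply mul_le_mul p.2.2 (hxnorm i) (euclNorm_nonneg _)
            (le_trans (specNorm_nonneg _) p.2.2)
        have habs : |netS p.val.1 p.val.2 (x i)| ≤ s1*s2 := by
          calc |netS p.val.1 p.val.2 (x i)|
              ≤ euclNorm p.val.1 * (specNorm p.val.2 * euclNorm (x i)) := h1
            _ ≤ s1*(s2*1) := h2
            _ = s1*s2 := by ring
        have hsg : sg (b i) * netS p.val.1 p.val.2 (x i) ≤ |netS p.val.1 p.val.2 (x i)| := by
          cases hbi : b i
          · rw [show sg false = -1 from rfl, neg_one_mul]
            exact neg_le_abs _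
          · rw [show sg true = 1 from rfl, one_mul]
            exact le_abs_self _
        exact le_trans hsg habs
      calc ∑ i, sg (b i) * netS p.val.1 p.val.2 (x i) ≤ ∑ _i : Fin m, s1*s2 :=
            Finset.sum_le_sum (fun i _ => hper i)
        _ = (m:ℝ) * (s1*s2) := by
            rw [Finset.sum_const, nsmul_eq_mul, card_univ, Fintype.card_fin]
    have hsup := le_ciSup bdd
      (⟨(V, U), hV, hU⟩ : {q : (Fin h → ℝ) × Matrix (Fin h) (Fin h) ℝ //
        euclNorm q.1 ≤ s1 ∧ specNorm q.2 ≤ s2})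
    have hmain1 : s1*s2/2 * (∑ c : Fin t → Bool, relu (T b c))
        ≤ ∑ i, sg (b i) * netS V U (x i) := by
      rw [hval, Finset.mul_sum]
      exact Finset.sum_le_sum (fun c _ => hlow c)
    exact le_trans hmain1 hsup
  -- ### counting the groups
  have hchar : ∀ (c : Fin t → Bool) (i : Fin m),
      (((i:ℕ) < h' * n ∧ grp i = c) ↔ ((E c).val * n ≤ (i:ℕ) ∧ (i:ℕ) < (E c).val * n + n)) := by
    intro c i
    have hgrpc : grp i = c ↔ ((i:ℕ)/n) % h' = (E c).val := by
      simp only [hgrpdef]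
      rw [Equiv.symm_apply_eq]
      exact Fin.ext_iff
    constructor
    · rintro ⟨hia, hgc⟩
      have hdiv : (i:ℕ)/n < h' := (Nat.div_lt_iff_lt_mul hnpos).mpr hia
      have hk : (i:ℕ)/n = (E c).val := by
        rw [← Nat.mod_eq_of_lt hdiv]
        exact hgrpc.mp hgc
      constructor
      · calc (E c).val * n = ((i:ℕ)/n) * n := by rw [hk]
          _ ≤ (i:ℕ) := Nat.div_mul_le_self _ _
      · have hdm := Nat.div_add_mod (i:ℕ) n
        have hmlt2 := Nat.mod_lt (i:ℕ) hnpos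
        calc (i:ℕ) = n * ((i:ℕ)/n) + (i:ℕ)%n := hdm.symm
          _ < n * ((i:ℕ)/n) + n := Nat.add_lt_add_left hmlt2 _
          _ = (E c).val * n + n := by rw [hk]; ring
    · rintro ⟨hlo, hhi⟩
      have hdiveq : (i:ℕ)/n = (E c).val := by
        apply Nat.div_eq_of_lt_le hlo
        calc (i:ℕ) < (E c).val * n + n := hhi
          _ = ((E c).val + 1) * n := by ring
      have hia : (i:ℕ) < h' * n := by
        calc (i:ℕ) < (E c).val * n + n := hhi
          _ = ((E c).val + 1) * n := by ring
          _ ≤ h' * n := Nat.mul_le_mul_right n (Nat.succ_le_of_lt (E c).isLt)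
      refine ⟨hia, hgrpc.mpr ?_⟩
      rw [hdiveq]
      exact Nat.mod_eq_of_lt (E c).isLt
  have cardA : ∀ c : Fin t → Bool,
      (univ.filter (fun i : Fin m => (i:ℕ) < h' * n ∧ grp i = c)).card = n := by
    intro c
    obtain ⟨a, ha⟩ : ∃ a, a = (E c).val * n := ⟨_, rfl⟩
    have hbound : a + n ≤ m := by
      rw [ha]
      calc (E c).val * n + n = ((E c).val + 1) * n := by ring
        _ ≤ h' * n := Nat.mul_le_mul_right n (Nat.succ_le_of_lt (E c).isLt)
        _ ≤ m := hactive
    have hchar2 : ∀ i : Fin m, (((i:ℕ) < h' * n ∧ grp i = c) ↔ (a ≤ (i:ℕ) ∧ (i:ℕ) < a + n)) := by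
      intro i
      rw [ha]
      exact hchar c i
    have hrwfil : (univ.filter (fun i : Fin m => (i:ℕ) < h' * n ∧ grp i = c))
        = Finset.image (fun j : Fin n => (⟨a + j.val, by
            have hj := j.isLt; omega⟩ : Fin m)) univ := by
      apply Finset.ext
      intro i
      simp only [Finset.mem_filter, Finset.mem_univ, true_and, Finset.mem_image]
      rw [hchar2 i]
      constructor
      · rintro ⟨h1, h2⟩
        refine ⟨⟨(i:ℕ) - a, by omega⟩, Fin.ext ?_⟩
        show a + ((i:ℕ) - a) = (i:ℕ)
        omega
      · rintro ⟨j, rfl⟩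
        have hj := j.isLt
        constructor
        · show a ≤ a + j.val
          omega
        · show a + j.val < a + n
          omega
    rw [hrwfil]
    rw [Finset.card_image_of_injective _ (fun j1 j2 hj => by
      apply Fin.ext
      have h12 : a + j1.val = a + j2.val := congrArg Fin.val hj
      omega)]
    rw [Finset.card_univ, Fintype.card_fin]
  -- ### global assembly
  set K : ℝ := ∑ d : Fin n → Bool, relu (∑ j, sg (d j)) with hKdef
  have hKb : (2:ℝ)^n * Real.sqrt n / (2 * Real.sqrt 3) ≤ K := sum_relu_Sb n hnpos
  have hKnn : 0 ≤ K := by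
    rw [hKdef]
    exact Finset.sum_nonneg (fun d _ => relu_nonneg _)
  have hbc : ∀ c : Fin t → Bool,
      ∑ b : Fin m → Bool, relu (T b c) = 2^(m-n) * K := by
    intro c
    have hTA : ∀ b : Fin m → Bool,
        T b c = ∑ i ∈ univ.filter (fun i : Fin m => (i:ℕ) < h' * n ∧ grp i = c), sg (b i) := by
      intro b
      simp only [hTdef]
      rw [Finset.sum_filter]
    rw [Finset.sum_congr rfl (fun b _ => by rw [hTA b])]
    rw [marg (univ.filter (fun i : Fin m => (i:ℕ) < h' * n ∧ grp i = c)) relu]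
    rw [cardA c]
    congr 1
    have e : {y : Fin m // y ∈ univ.filter (fun i : Fin m => (i:ℕ) < h' * n ∧ grp i = c)}
        ≃ Fin n :=
      Fintype.equivFinOfCardEq (by rw [Fintype.card_coe, cardA c])
    rw [sum_sg_transport e relu, hKdef]
  have hglobal : s1*s2/2 * ((h':ℝ) * ((2:ℝ)^(m-n) * K))
      ≤ ∑ b : Fin m → Bool,
          ⨆ p : {q : (Fin h → ℝ) × Matrix (Fin h) (Fin h) ℝ //
              euclNorm q.1 ≤ s1 ∧ specNorm q.2 ≤ s2},
            ∑ i, sg (b i) * netS p.val.1 p.val.2 (x i) := by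
    have h2 : ∑ b : Fin m → Bool, (s1*s2/2 * ∑ c : Fin t → Bool, relu (T b c))
        ≤ ∑ b : Fin m → Bool,
            ⨆ p : {q : (Fin h → ℝ) × Matrix (Fin h) (Fin h) ℝ //
                euclNorm q.1 ≤ s1 ∧ specNorm q.2 ≤ s2},
              ∑ i, sg (b i) * netS p.val.1 p.val.2 (x i) :=
      Finset.sum_le_sum (fun b _ => main b)
    have h1 : ∑ b : Fin m → Bool, (s1*s2/2 * ∑ c : Fin t → Bool, relu (T b c))
        = s1*s2/2 * ((h':ℝ) * ((2:ℝ)^(m-n) * K)) := by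
      rw [← Finset.mul_sum, Finset.sum_comm]
      congr 1
      rw [Finset.sum_congr rfl (fun c _ => hbc c), Finset.sum_const, nsmul_eq_mul,
        card_univ, cardI]
    rw [← h1]
    exact h2
  have h2m : (0:ℝ) < 2^m := by positivity
  have hpow : (2:ℝ)^(m-n) * (2:ℝ)^n = (2:ℝ)^m := by
    rw [← pow_add]
    congr 1
    omega
  have hstep : s1*s2/2 * ((h':ℝ) * (Real.sqrt n / (2*Real.sqrt 3))) * 2^m
      ≤ ∑ b : Fin m → Bool,
          ⨆ p : {q : (Fin h → ℝ) × Matrix (Fin h) (Fin h) ℝ //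
              euclNorm q.1 ≤ s1 ∧ specNorm q.2 ≤ s2},
            ∑ i, sg (b i) * netS p.val.1 p.val.2 (x i) := by
    have hKmono : (h':ℝ) * ((2:ℝ)^(m-n) * ((2:ℝ)^n * Real.sqrt n / (2*Real.sqrt 3)))
        ≤ (h':ℝ) * ((2:ℝ)^(m-n) * K) := by
      apply mul_le_mul_of_nonneg_left _ (by positivity)
      apply mul_le_mul_of_nonneg_left hKb (by positivity)
    have heq : s1*s2/2 * ((h':ℝ) * (Real.sqrt n / (2*Real.sqrt 3))) * 2^m
        = s1*s2/2 * ((h':ℝ) * ((2:ℝ)^(m-n) * ((2:ℝ)^n * Real.sqrt n / (2*Real.sqrt 3)))) := by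
      rw [← hpow]
      ring
    rw [heq]
    calc s1*s2/2 * ((h':ℝ) * ((2:ℝ)^(m-n) * ((2:ℝ)^n * Real.sqrt n / (2*Real.sqrt 3))))
        ≤ s1*s2/2 * ((h':ℝ) * ((2:ℝ)^(m-n) * K)) :=
          mul_le_mul_of_nonneg_left hKmono
            (div_nonneg (mul_nonneg hs1 hs2) (by norm_num))
      _ ≤ _ := hglobal
  have hdiv : s1*s2/2 * ((h':ℝ) * (Real.sqrt n / (2*Real.sqrt 3)))
      ≤ (∑ b : Fin m → Bool,
          ⨆ p : {q : (Fin h → ℝ) × Matrix (Fin h) (Fin h) ℝ //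
              euclNorm q.1 ≤ s1 ∧ specNorm q.2 ≤ s2},
            ∑ i, sg (b i) * netS p.val.1 p.val.2 (x i)) / 2^m :=
    (le_div_iff₀ h2m).mpr hstep
  have hfin : s1 * s2 * Real.sqrt h / (16 * Real.sqrt m)
      ≤ (1/(m:ℝ)) * (s1*s2/2 * ((h':ℝ) * (Real.sqrt n / (2*Real.sqrt 3)))) := by
    have h1 := final_num h m h' n hmpos hkey
    have h2 := mul_le_mul_of_nonneg_left h1 (mul_nonneg hs1 hs2)
    have hm0 : (0:ℝ) < (m:ℝ) := by exact_mod_cast hmpos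
    have hs3 : (0:ℝ) < Real.sqrt 3 := Real.sqrt_pos.mpr (by norm_num)
    calc s1 * s2 * Real.sqrt h / (16 * Real.sqrt m)
        = (s1*s2) * (Real.sqrt h / (16 * Real.sqrt m)) := by ring
      _ ≤ (s1*s2) * ((h':ℝ)*Real.sqrt n/(4*Real.sqrt 3*m)) := h2
      _ = (1/(m:ℝ)) * (s1*s2/2 * ((h':ℝ) * (Real.sqrt n / (2*Real.sqrt 3)))) := by
          field_simp [hm0.ne', hs3.ne']
          all_goals first
          | exact Or.inl trivial
          | (left; first | trivial | ring)
          | ring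
          | simp
          | tauto
  refine le_trans hfin ?_
  exact mul_le_mul_of_nonneg_left hdiv (by positivity)

end
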